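/- arXiv:2510.11425 — 4 statements merged into one kernel-verified Lean document; each statement's English description precedes it below -/
import Mathlib

section
/- Let k be a field, let A = (b_{i,j}) be an N × N matrix over k, let 1 ≤ κ < N, and suppose: (i) for every κ-element subset S ⊆ {1,…,N}, the κ × κ minor of A with row set S and column set S equals a fixed nonzero scalar a; and (ii) every κ × κ minor of A whose row set differs from its column set equals 0. Then A is a nonzero scalar multiple of the identity matrix. -/
/-!
Cramer's rule kills the off-diagonal entries: if `i ∈ S ∌ j` with `#S = κ`, the principal
minor on `S` equals `a ≠ 0`, while replacing any column of it by the column of `j` restricted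
to `S` gives a minor whose column set differs from `S`, hence `0`. So all Cramer
determinants of the system with right-hand side `(A s j)_{s ∈ S}` vanish, and that vector
is `0`. The matrix is then diagonal, every product of `κ` diagonal entries equals `a`, and
exchanging one factor shows that all diagonal entries coincide.
-/

open Matrix Finset

theorem Function.Injective.update_of_notMem_range {α β : Type*} [DecidableEq α] {f : α → β}
    (hf : Function.Injective f) (a : α) {b : β} (hb : b ∉ Set.range f) :
    Function.Injective (Function.update f a b) := by
  intro u v h
  simp only [Function.update_apply] at h
  split_ifs at h with hu hv hv
  · exact hu.trans hv.symm
  · exact absurd ⟨v, h.symm⟩ hb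
  · exact absurd ⟨u, h⟩ hb
  · exact hf h

theorem Finset.exists_card_eq_mem_notMem {ι : Type*} [Fintype ι] [DecidableEq ι] {i j : ι}
    (hij : i ≠ j) {κ : ℕ} (hκ : 1 ≤ κ) (hκι : κ < Fintype.card ι) :
    ∃ S : Finset ι, #S = κ ∧ i ∈ S ∧ j ∉ S := by
  obtain ⟨S, hiS, hSj, hS⟩ := exists_subsuperset_card_eq (s := {i}) (t := univ.erase j)
    (by simpa using hij) (by simpa using hκ)
    (by rw [card_erase_of_mem (mem_univ _), card_univ]; omega)
  exact ⟨S, hS, singleton_subset_iff.mp hiS, fun h => by simpa using hSj h⟩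

theorem Finset.apply_eq_of_forall_prod_card_eq {M ι : Type*} [CommMonoidWithZero M]
    [IsCancelMulZero M] [DecidableEq ι] {d : ι → M} {κ : ℕ} {a : M} (ha : a ≠ 0)
    (hprod : ∀ S : Finset ι, #S = κ → ∏ x ∈ S, d x = a)
    {S : Finset ι} (hS : #S = κ) {i j : ι} (hi : i ∈ S) (hj : j ∉ S) : d i = d j := by
  have hi' : d i * ∏ x ∈ S.erase i, d x = a := by rw [mul_prod_erase S d hi, hprod S hS]
  have hj' : d j * ∏ x ∈ S.erase i, d x = a := by
    have hjS : j ∉ S.erase i := fun h => hj (mem_of_mem_erase h)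
    have hpos : 0 < #S := card_pos.mpr ⟨i, hi⟩
    rw [← prod_insert hjS, hprod]
    rw [card_insert_of_notMem hjS, card_erase_of_mem hi]
    omega
  exact mul_right_cancel₀ (right_ne_zero_of_mul (hi'.trans_ne ha)) (hi'.trans hj'.symm)

namespace Matrix

variable {R ι : Type*} [CommRing R]

theorem eq_zero_of_forall_det_updateCol_eq_zero {n : Type*} [Fintype n] [DecidableEq n]
    {B : Matrix n n R} (hB : IsUnit B.det) {c : n → R}
    (h : ∀ s, (B.updateCol s c).det = 0) : c = 0 := by
  have hcramer : B.cramer c = 0 := funext fun s => by rw [cramer_apply, h s]; rfl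
  have hmul := B.mulVec_cramer c
  rwa [hcramer, mulVec_zero, eq_comm, hB.smul_eq_zero] at hmul

section LinearOrder

variable [LinearOrder ι]

theorem IsDiag.det_submatrix_orderEmbOfFin {A : Matrix ι ι R} (hA : A.IsDiag)
    {S : Finset ι} {κ : ℕ} (hS : #S = κ) :
    (A.submatrix (S.orderEmbOfFin hS) (S.orderEmbOfFin hS)).det = ∏ x ∈ S, A x x := by
  conv_lhs => rw [← hA.diagonal_diag]
  rw [submatrix_diagonal _ _ (S.orderEmbOfFin hS).injective, det_diagonal]
  conv_rhs => rw [← map_orderEmbOfFin_univ S hS, prod_map]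
  rfl

def OffDiagonalMinorsVanish (A : Matrix ι ι R) (κ : ℕ) : Prop :=
  ∀ f g : Fin κ → ι, StrictMono f → StrictMono g → Set.range f ≠ Set.range g →
    (A.submatrix f g).det = 0

namespace OffDiagonalMinorsVanish

variable {A : Matrix ι ι R} {κ : ℕ}

theorem det_submatrix_of_injective (hA : OffDiagonalMinorsVanish A κ) {f g : Fin κ → ι}
    (hf : StrictMono f) (hg : Function.Injective g) (hfg : Set.range f ≠ Set.range g) :
    (A.submatrix f g).det = 0 := by
  set σ := Tuple.sort g
  have hsorted : StrictMono (g ∘ σ) :=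
    (Tuple.monotone_sort g).strictMono_of_injective (hg.comp σ.injective)
  have hperm : A.submatrix f g = (A.submatrix f (g ∘ σ)).submatrix id σ.symm := by
    simp [submatrix_submatrix, Function.comp_assoc]
  rw [hperm, det_permute', hA f _ hf hsorted (by rwa [EquivLike.range_comp]), mul_zero]

theorem apply_eq_zero (hA : OffDiagonalMinorsVanish A κ) {S : Finset ι} (hS : #S = κ)
    (hdet : IsUnit (A.submatrix (S.orderEmbOfFin hS) (S.orderEmbOfFin hS)).det)
    {i j : ι} (hi : i ∈ S) (hj : j ∉ S) : A i j = 0 := by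
  set e := S.orderEmbOfFin hS
  have hje : j ∉ Set.range e := by simpa [e, range_orderEmbOfFin] using hj
  have hcol : (fun t => A (e t) j) = 0 := by
    refine eq_zero_of_forall_det_updateCol_eq_zero hdet fun s => ?_
    have hupdate : (A.submatrix e e).updateCol s (fun t => A (e t) j) =
        A.submatrix e (Function.update e s j) := by
      ext t u
      rcases eq_or_ne u s with rfl | hu <;> simp [*]
    rw [hupdate]
    refine hA.det_submatrix_of_injective e.strictMono
      (e.injective.update_of_notMem_range s hje) ?_
    exact fun hrange => hje (hrange ▸ ⟨s, Function.update_self s j e⟩)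
  obtain ⟨t, rfl⟩ : i ∈ Set.range e := by simpa [e, range_orderEmbOfFin] using hi
  exact congrFun hcol t

end OffDiagonalMinorsVanish

end LinearOrder

end Matrix

/-- If all principal `κ × κ` minors of an `N × N` matrix (`1 ≤ κ < N`) equal a fixed
nonzero scalar `a`, and every `κ × κ` minor whose row set differs from its column
set vanishes, then the matrix is a nonzero scalar multiple of the identity. -/
theorem scalar_of_minor_conditions (k : Type) [Field k] (N κ : ℕ)
    (hκ : 1 ≤ κ) (hκN : κ < N) (A : Matrix (Fin N) (Fin N) k) (a : k) (ha : a ≠ 0)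
    (hprincipal : ∀ f : Fin κ → Fin N, StrictMono f → (A.submatrix f f).det = a)
    (hoff : ∀ f g : Fin κ → Fin N, StrictMono f → StrictMono g →
      Set.range f ≠ Set.range g → (A.submatrix f g).det = 0) :
    ∃ c : k, c ≠ 0 ∧ A = c • (1 : Matrix (Fin N) (Fin N) k) := by
  have hsep : ∀ i j : Fin N, i ≠ j → ∃ S : Finset (Fin N), #S = κ ∧ i ∈ S ∧ j ∉ S :=
    fun i j hij => exists_card_eq_mem_notMem hij hκ (by simpa using hκN)
  have hminor (S : Finset (Fin N)) (hS : #S = κ) :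
      (A.submatrix (S.orderEmbOfFin hS) (S.orderEmbOfFin hS)).det = a :=
    hprincipal _ (S.orderEmbOfFin hS).strictMono
  have hdiag : A.IsDiag := fun i j hij => by
    obtain ⟨S, hS, hi, hj⟩ := hsep i j hij
    exact OffDiagonalMinorsVanish.apply_eq_zero hoff hS (hminor S hS ▸ ha.isUnit) hi hj
  have hprod (S : Finset (Fin N)) (hS : #S = κ) : ∏ x ∈ S, A x x = a := by
    rw [← hdiag.det_submatrix_orderEmbOfFin hS, hminor S hS]
  let i₀ : Fin N := ⟨0, by omega⟩
  obtain ⟨S₀, hS₀, hi₀, -⟩ := hsep i₀ ⟨1, by omega⟩ (by simp [i₀, Fin.ext_iff])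
  have hconst (i : Fin N) : A i i = A i₀ i₀ := by
    rcases eq_or_ne i i₀ with rfl | hi
    · rfl
    obtain ⟨S, hS, hiS, hi₀S⟩ := hsep i i₀ hi
    exact apply_eq_of_forall_prod_card_eq ha hprod hS hiS hi₀S
  refine ⟨A i₀ i₀, fun h => ha (hprod S₀ hS₀ ▸ prod_eq_zero hi₀ h), ?_⟩
  calc A = diagonal A.diag := hdiag.diagonal_diag.symm
    _ = A i₀ i₀ • 1 := by rw [smul_one_eq_diagonal]; exact congrArg diagonal (funext hconst)
end

section
/- Let i ≤ r and let G be the m × n matrix over k[t] of block form G = diag(I_{i-1}, 0) + t·[[0,0],[0,M]] with M an (m−i+1) × (n−i+1) matrix over k[t]. Then every r × r minor of G, viewed as a polynomial in t, has t-adic order at least r − i + 1; moreover, a minor on rows {k_1 < ⋯ < k_r} and columns {j_1 < ⋯ < j_r} has a nonzero coefficient of t^{r-i+1} only if {k_1,…,k_{i-1}} = {j_1,…,j_{i-1}} = {1,…,i−1}, in which case that coefficient equals the (r−i+1) × (r−i+1) minor of M(0) on rows {k_i − i + 1, …, k_r − i + 1} and columns {j_i − i + 1, …, j_r − i + 1}.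 -/
/-!
Every row of the minor with index `≥ a` is a row of `G` divisible by `X`, so the minor is `X ^ ρ`
times a determinant whose constant term is `det N`, where `N` consists of the constant terms of
the first `a` rows and the `X`-coefficients of the others. Each of the first `a` rows of `N` is
zero or a unit vector in a column `j` with `cols j < a`. If `det N ≠ 0`, a permutation with nonzero
diagonal matches these rows injectively with such columns, which forces `rows` and `cols` to be the
identity on `{0, …, a - 1}`; then `N` is block triangular with identity corner, and `det N` is the
minor of `M(0)`.
-/

open Matrix Polynomial Finset

lemma Fin.val_le_val_of_strictMono {s t : ℕ} {f : Fin s → Fin t} (hf : StrictMono f)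
    (v : Fin s) : (v : ℕ) ≤ f v := by
  simpa using card_le_card_of_injOn f (s := Iio v) (t := Iio (f v))
    (fun x hx => by simpa using hf (by simpa using hx)) hf.injective.injOn

lemma Fin.val_eq_of_strictMono_of_forall_lt {s t a : ℕ} {f : Fin s → Fin t}
    (hf : StrictMono f) (ha : a ≤ s) (hfa : ∀ v : Fin s, (v : ℕ) < a → (f v : ℕ) < a)
    (v : Fin s) (hv : (v : ℕ) < a) : (f v : ℕ) = v := by
  let g : Fin a → Fin a := fun u => ⟨f (castLE ha u), hfa _ u.isLt⟩
  have hg : StrictMono g := fun x y hxy => hf (by simpa using hxy)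
  simpa [g] using congrArg Fin.val (congrFun hg.eq_id ⟨v, hv⟩)

lemma Fin.card_filter_le_val_add (a ρ : ℕ) : #{u : Fin (a + ρ) | a ≤ (u : ℕ)} = ρ := by
  have := card_filter_add_card_filter_not (s := univ) fun u : Fin (a + ρ) => (u : ℕ) < a
  simp [Fin.card_filter_val_lt] at this
  omega

namespace Matrix

variable {ι R : Type*} [Fintype ι] [DecidableEq ι] [CommRing R]

lemma exists_perm_forall_ne_zero_of_det_ne_zero {A : Matrix ι ι R} (h : A.det ≠ 0) :
    ∃ σ : Equiv.Perm ι, ∀ i, A (σ i) i ≠ 0 := by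
  rw [det_apply] at h
  obtain ⟨σ, -, hσ⟩ := exists_ne_zero_of_sum_ne_zero h
  exact ⟨σ, fun i hi => hσ (by rw [prod_eq_zero (f := fun j => A (σ j) j) (mem_univ i) hi,
    smul_zero])⟩

lemma card_filter_le_card_filter_of_det_ne_zero {A : Matrix ι ι R} (h : A.det ≠ 0)
    (p q : ι → Prop) [DecidablePred p] [DecidablePred q]
    (hA : ∀ i j, p i → ¬ q j → A i j = 0) : #{i | p i} ≤ #{j | q j} := by
  obtain ⟨σ, hσ⟩ := exists_perm_forall_ne_zero_of_det_ne_zero h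
  refine card_le_card_of_injOn σ.symm (fun i hi => ?_) σ.symm.injective.injOn
  simp only [coe_filter, mem_univ, true_and, Set.mem_ofPred_eq] at hi ⊢
  by_contra hq
  exact hσ (σ.symm i) (by simpa using hA i _ hi hq)

lemma det_eq_X_pow_card_mul_det_divX (A : Matrix ι ι R[X]) (p : ι → Prop) [DecidablePred p]
    (hA : ∀ i, p i → ∀ j, (A i j).coeff 0 = 0) :
    A.det = X ^ #{i | p i} * (of fun i j => if p i then (A i j).divX else A i j).det := by
  set B : Matrix ι ι R[X] := of fun i j => if p i then (A i j).divX else A i j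
  have hfactor : A = of fun i j => (if p i then X else 1) * B i j := by
    refine Matrix.ext fun i j => ?_
    by_cases hi : p i
    · simpa [B, hi, hA i hi j] using (X_mul_divX_add (A i j)).symm
    · simp [B, hi]
  rw [hfactor, det_mul_column, ← prod_filter, prod_const]

lemma coeff_det_of_coeff_zero_eq_zero (A : Matrix ι ι R[X]) (p : ι → Prop) [DecidablePred p]
    (hA : ∀ i, p i → ∀ j, (A i j).coeff 0 = 0) :
    (∀ w < #{i | p i}, A.det.coeff w = 0) ∧
      A.det.coeff #{i | p i} = (of fun i j => (A i j).coeff (if p i then 1 else 0)).det := by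
  rw [det_eq_X_pow_card_mul_det_divX A p hA]
  refine ⟨fun w hw => X_pow_dvd_iff.mp (dvd_mul_right _ _) w hw, ?_⟩
  rw [coeff_X_pow_mul', if_pos le_rfl, Nat.sub_self, ← constantCoeff_apply, RingHom.map_det]
  congr 1
  ext i j
  by_cases hi : p i <;> simp [hi, coeff_divX]

lemma det_eq_det_submatrix_natAdd {a ρ : ℕ} (A : Matrix (Fin (a + ρ)) (Fin (a + ρ)) R)
    (h₁₁ : A.submatrix (Fin.castAdd ρ) (Fin.castAdd ρ) = 1)
    (h₂₁ : A.submatrix (Fin.natAdd a) (Fin.castAdd ρ) = 0) :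
    A.det = (A.submatrix (Fin.natAdd a) (Fin.natAdd a)).det := by
  rw [← det_submatrix_equiv_self finSumFinEquiv]
  set B := A.submatrix finSumFinEquiv finSumFinEquiv
  have hB₁₁ : B.toBlocks₁₁ = 1 := h₁₁
  have hB₂₁ : B.toBlocks₂₁ = 0 := h₂₁
  rw [← fromBlocks_toBlocks B, hB₁₁, hB₂₁, det_fromBlocks_zero₂₁, det_one, one_mul]
  rfl

end Matrix

/-- `G = diag(I_a, 0) + X • [[0, 0], [0, M]]`, where only the lower right block of `M` matters. -/
def IsIdentBlockAddXBlock {k : Type*} [CommRing k] {m n : ℕ} (a : ℕ)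
    (M G : Matrix (Fin m) (Fin n) k[X]) : Prop :=
  ∀ i j, G i j = (if (i : ℕ) = (j : ℕ) ∧ (i : ℕ) < a then 1 else 0) +
    (if a ≤ (i : ℕ) ∧ a ≤ (j : ℕ) then X * M i j else 0)

namespace IsIdentBlockAddXBlock

variable {k : Type*} [CommRing k] {a ρ m n s : ℕ} {M G : Matrix (Fin m) (Fin n) k[X]}

lemma coeff_zero (hG : IsIdentBlockAddXBlock a M G) (i : Fin m) (j : Fin n) :
    (G i j).coeff 0 = if (i : ℕ) = j ∧ (i : ℕ) < a then 1 else 0 := by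
  rw [hG]
  split_ifs <;> simp

lemma coeff_one (hG : IsIdentBlockAddXBlock a M G) (i : Fin m) (j : Fin n) :
    (G i j).coeff 1 = if a ≤ (i : ℕ) ∧ a ≤ (j : ℕ) then (M i j).coeff 0 else 0 := by
  rw [hG]
  split_ifs <;> simp [Polynomial.coeff_one]

lemma val_eq_of_det_ne_zero (hG : IsIdentBlockAddXBlock a M G) {rows : Fin s → Fin m}
    {cols : Fin s → Fin n} (hrows : StrictMono rows) (hcols : StrictMono cols) (has : a ≤ s)
    (h : (of fun u v => (G (rows u) (cols v)).coeff (if a ≤ (u : ℕ) then 1 else 0)).det ≠ 0)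
    (v : Fin s) (hv : (v : ℕ) < a) : (rows v : ℕ) = v ∧ (cols v : ℕ) = v := by
  set N : Matrix (Fin s) (Fin s) k :=
    of fun u v => (G (rows u) (cols v)).coeff (if a ≤ (u : ℕ) then 1 else 0)
  have top_row : ∀ u j : Fin s, (u : ℕ) < a → N u j ≠ 0 →
      (rows u : ℕ) = cols j ∧ (rows u : ℕ) < a := by
    intro u j hu hN
    by_contra hc
    simp [N, hG.coeff_zero, not_le.mpr hu, hc] at hN
  have rows_lt : ∀ u : Fin s, (u : ℕ) < a → (rows u : ℕ) < a := fun u hu => by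
    by_contra hr
    exact h (det_eq_zero_of_row_eq_zero u fun j => not_not.mp fun hN => hr (top_row u j hu hN).2)
  -- at least `a` indices `j` have `cols j < a`; as `j ≤ cols j`, these are the `j < a`
  have cols_lt : ∀ j : Fin s, (j : ℕ) < a → (cols j : ℕ) < a := by
    have hcard := card_filter_le_card_filter_of_det_ne_zero h (fun u : Fin s => (u : ℕ) < a)
      (fun j => (cols j : ℕ) < a) fun u j hu hj => not_not.mp fun hN =>
        hj ((top_row u j hu hN).1 ▸ (top_row u j hu hN).2)
    rw [Fin.card_filter_val_lt, min_eq_right has] at hcard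
    intro j hj
    exact (Fin.lt_card_filter_univ_iff_apply_of_imp (j := j) (fun j => (cols j : ℕ) < a)
      fun i j hji hi => lt_of_le_of_lt (Fin.val_le_of_le (hcols.monotone hji)) hi).mp (by omega)
  exact ⟨Fin.val_eq_of_strictMono_of_forall_lt hrows has rows_lt v hv,
    Fin.val_eq_of_strictMono_of_forall_lt hcols has cols_lt v hv⟩

lemma det_eq_det_coeff_zero_submatrix (hG : IsIdentBlockAddXBlock a M G)
    {rows : Fin (a + ρ) → Fin m} {cols : Fin (a + ρ) → Fin n}
    (hrows : StrictMono rows) (hcols : StrictMono cols)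
    (hid : ∀ v : Fin (a + ρ), (v : ℕ) < a → (rows v : ℕ) = v ∧ (cols v : ℕ) = v) :
    (of fun u v => (G (rows u) (cols v)).coeff (if a ≤ (u : ℕ) then 1 else 0)).det =
      (of fun u w : Fin ρ => (M (rows (Fin.natAdd a u)) (cols (Fin.natAdd a w))).coeff 0).det := by
  rw [det_eq_det_submatrix_natAdd]
  · congr 1
    ext u w
    have hr := Fin.val_le_val_of_strictMono hrows (Fin.natAdd a u)
    have hc := Fin.val_le_val_of_strictMono hcols (Fin.natAdd a w)
    simp only [Fin.val_natAdd] at hr hc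
    simp [hG.coeff_one, le_self_add.trans hr, le_self_add.trans hc]
  · ext u v
    have hr := (hid (Fin.castAdd ρ u) u.isLt).1
    have hc := (hid (Fin.castAdd ρ v) v.isLt).2
    simp only [Fin.val_castAdd] at hr hc
    rw [submatrix_apply, of_apply, Fin.val_castAdd, if_neg (not_le.mpr u.isLt), hG.coeff_zero,
      hr, hc]
    simp [one_apply, Fin.ext_iff, u.isLt]
  · ext u v
    simp [hG.coeff_one, hid]

end IsIdentBlockAddXBlock

/-- Leading behavior of `r × r` minors of `G = diag(I_a, 0) + t·[[0,0],[0,M]]`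
(with `a = i - 1`, `ρ = r - i + 1`, so `r = a + ρ`): every `r × r` minor has
`t`-adic order at least `ρ`; its coefficient of `t^ρ` can be nonzero only if the
first `a` selected rows and columns are exactly the first `a` indices, in which
case that coefficient equals the corresponding `ρ × ρ` minor of `M(0)`. -/
theorem minor_leading_coefficient (k : Type) [Field k] (a ρ m n : ℕ)
    (M G : Matrix (Fin m) (Fin n) (Polynomial k))
    (hG : ∀ i j, G i j =
      (if (i : ℕ) = (j : ℕ) ∧ (i : ℕ) < a then 1 else 0) +
      (if a ≤ (i : ℕ) ∧ a ≤ (j : ℕ) then Polynomial.X * M i j else 0))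
    (rows : Fin (a + ρ) → Fin m) (cols : Fin (a + ρ) → Fin n)
    (hrows : StrictMono rows) (hcols : StrictMono cols) :
    (∀ w : ℕ, w < ρ → ((G.submatrix rows cols).det).coeff w = 0) ∧
    (((G.submatrix rows cols).det).coeff ρ ≠ 0 →
      ∀ v : Fin (a + ρ), (v : ℕ) < a → ((rows v : ℕ) = (v : ℕ) ∧ (cols v : ℕ) = (v : ℕ))) ∧
    ((∀ v : Fin (a + ρ), (v : ℕ) < a → ((rows v : ℕ) = (v : ℕ) ∧ (cols v : ℕ) = (v : ℕ))) →
      ((G.submatrix rows cols).det).coeff ρ =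
        (Matrix.of (fun (u w : Fin ρ) =>
          (M (rows ⟨a + (u : ℕ), by omega⟩) (cols ⟨a + (w : ℕ), by omega⟩)).coeff 0)).det) := by
  have hG : IsIdentBlockAddXBlock a M G := hG
  have hbottom : ∀ u : Fin (a + ρ), a ≤ (u : ℕ) → ∀ v,
      ((G.submatrix rows cols) u v).coeff 0 = 0 := fun u hu v => by
    have := Fin.val_le_val_of_strictMono hrows u
    rw [submatrix_apply, hG.coeff_zero, if_neg (by omega)]
  obtain ⟨hlow, hlead⟩ := coeff_det_of_coeff_zero_eq_zero _ _ hbottom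
  rw [Fin.card_filter_le_val_add] at hlow hlead
  exact ⟨hlow, fun h => hG.val_eq_of_det_ne_zero hrows hcols (by omega) (hlead ▸ h),
    fun hid => hlead.trans (hG.det_eq_det_coeff_zero_submatrix hrows hcols hid)⟩
end

section
/- For a prime power q and natural numbers ρ ≤ m ≤ n, the number of m × n matrices over F_q of rank exactly ρ equals q^{ρ(ρ-1)/2} · ∏_{j=0}^{ρ-1} (q^{m-j} − 1)(q^{n-j} − 1)/(q^{ρ-j} − 1). -/
/-!
Every matrix `A` of rank `ρ` factors as `A = B * C` through `K^ρ`, with `B` of full column rank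
and `C` of full row rank, and two such factorizations differ by a unique `g ∈ GL_ρ`:
`(B, C) ↦ (B g⁻¹, g C)`. Hence `#{rank ρ} · |GL_ρ| = #{B} · #{C}`. The matrices `C` (and, after
transposing, `B`) are the linearly independent `ρ`-tuples of rows, counted by
`∏_{i<ρ} (q^M - q^i) = q^{ρ(ρ-1)/2} ∏_{j<ρ} (q^{M-j} - 1)`, and `|GL_ρ|` is the case `M = ρ`.
-/

open Matrix

theorem card_eq_card_mul_card_of_nonempty_fiber_equiv {α β γ : Type*} (f : α → β)
    (e : ∀ b, Nonempty ({a // f a = b} ≃ γ)) : Nat.card α = Nat.card β * Nat.card γ := by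
  rw [← Nat.card_prod]
  exact Nat.card_congr <| (Equiv.sigmaFiberEquiv f).symm.trans <|
    (Equiv.sigmaCongrRight fun b => (e b).some).trans (Equiv.sigmaEquivProd β γ)

theorem cast_prod_pow_sub_pow {R : Type*} [CommRing R] {q M ρ : ℕ} (hq : 0 < q) (hρ : ρ ≤ M) :
    ((∏ i : Fin ρ, (q ^ M - q ^ (i : ℕ)) : ℕ) : R) =
      (q : R) ^ (ρ * (ρ - 1) / 2) * ∏ j ∈ Finset.range ρ, ((q : R) ^ (M - j) - 1) := by
  have hfactor : ∀ j ∈ Finset.range ρ,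
      ((q ^ M - q ^ j : ℕ) : R) = (q : R) ^ j * ((q : R) ^ (M - j) - 1) := by
    intro j hj
    have hjM : j ≤ M := (Finset.mem_range.1 hj).le.trans hρ
    rw [Nat.cast_sub (Nat.pow_le_pow_right hq hjM), mul_sub, mul_one, ← pow_add,
      Nat.add_sub_cancel' hjM]
    push_cast
    ring
  rw [Nat.cast_prod, Fin.prod_univ_eq_prod_range (fun j => ((q ^ M - q ^ j : ℕ) : R)),
    Finset.prod_congr rfl hfactor, Finset.prod_mul_distrib, Finset.prod_pow_eq_pow_sum,
    Finset.sum_range_id]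

namespace Matrix

section CommRing

variable {R : Type*} [CommRing R] {k m n : Type*} [Fintype k] [Fintype m] [Fintype n]
  [DecidableEq k]

theorem exists_unit_of_mul_eq_mul {L : Matrix k m R} {S : Matrix n k R} {B₀ B : Matrix m k R}
    {C₀ C : Matrix k n R} (hL : L * B = 1) (hS : C * S = 1) (h : B₀ * C₀ = B * C) :
    ∃ g : (Matrix k k R)ˣ, B₀ * (↑g⁻¹ : Matrix k k R) = B ∧ (g : Matrix k k R) * C₀ = C := by
  have hgC : L * B₀ * C₀ = C := by
    rw [Matrix.mul_assoc, h, ← Matrix.mul_assoc, hL, Matrix.one_mul]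
  have hBg : B₀ * (C₀ * S) = B := by
    rw [← Matrix.mul_assoc, h, Matrix.mul_assoc, hS, Matrix.mul_one]
  have hunit : L * B₀ * (C₀ * S) = 1 := by rw [Matrix.mul_assoc, hBg, hL]
  exact ⟨⟨L * B₀, C₀ * S, hunit, mul_eq_one_comm.mp hunit⟩, hBg, hgC⟩

end CommRing

section Field

variable {K : Type*} [Field K] {k m n : Type*} [Fintype k] [Fintype n]

theorem rank_eq_card_height_iff_exists_mul_eq_one [Fintype m] [DecidableEq m]
    {A : Matrix m n K} :
    A.rank = Fintype.card m ↔ ∃ B : Matrix n m K, A * B = 1 := by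
  rw [← mulVec_surjective_iff_exists_right_inverse, ← coe_mulVecLin, ← LinearMap.range_eq_top,
    rank, ← Module.finrank_fintype_fun_eq_card K]
  exact ⟨Submodule.eq_top_of_finrank_eq, fun h => by rw [h, finrank_top]⟩

theorem rank_eq_card_width_iff_exists_mul_eq_one [Fintype m] [DecidableEq n]
    {A : Matrix m n K} :
    A.rank = Fintype.card n ↔ ∃ B : Matrix n m K, B * A = 1 := by
  rw [← rank_transpose, rank_eq_card_height_iff_exists_mul_eq_one]
  constructor <;> rintro ⟨B, hB⟩ <;> refine ⟨Bᵀ, ?_⟩ <;>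
    simpa [transpose_mul] using congrArg transpose hB

theorem rank_eq_card_height_iff_linearIndependent_row [Fintype m] {A : Matrix m n K} :
    A.rank = Fintype.card m ↔ LinearIndependent K A.row := by
  rw [linearIndependent_iff_card_eq_finrank_span, rank_eq_finrank_span_row, eq_comm, Set.finrank]

theorem rank_mul_eq_card_of_rank_eq_card [Fintype m] [DecidableEq k] {B : Matrix m k K}
    {C : Matrix k n K}    (hB : B.rank = Fintype.card k) (hC : C.rank = Fintype.card k) :
    (B * C).rank = Fintype.card k := by
  obtain ⟨L, hL⟩ := rank_eq_card_width_iff_exists_mul_eq_one.mp hB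
  obtain ⟨S, hS⟩ := rank_eq_card_height_iff_exists_mul_eq_one.mp hC
  refine le_antisymm ((rank_mul_le_right B C).trans hC.le) ?_
  calc Fintype.card k = (L * (B * C) * S).rank := by
        rw [← Matrix.mul_assoc, hL, Matrix.one_mul, hS, rank_one]
    _ ≤ (L * (B * C)).rank := rank_mul_le_left _ _
    _ ≤ (B * C).rank := rank_mul_le_right _ _

theorem exists_mul_eq_of_rank_eq [DecidableEq k] [DecidableEq n] {A : Matrix m n K}
    (hA : A.rank = Fintype.card k) : ∃ (B : Matrix m k K) (C : Matrix k n K),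
      B.rank = Fintype.card k ∧ C.rank = Fintype.card k ∧ B * C = A := by
  let f := A.mulVecLin
  let e : LinearMap.range f ≃ₗ[K] (k → K) :=
    LinearEquiv.ofFinrankEq _ _ (hA.trans (Module.finrank_fintype_fun_eq_card K).symm)
  let B := LinearMap.toMatrix' ((LinearMap.range f).subtype ∘ₗ e.symm.toLinearMap)
  let C := LinearMap.toMatrix' (e.toLinearMap ∘ₗ f.rangeRestrict)
  have hBC : B * C = A := by
    have hfactor : ((LinearMap.range f).subtype ∘ₗ e.symm.toLinearMap) ∘ₗ
        (e.toLinearMap ∘ₗ f.rangeRestrict) = f := by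
      ext x
      simp
    rw [← LinearMap.toMatrix'_comp, hfactor]
    exact LinearMap.toMatrix'_toLin' A
  refine ⟨B, C, ?_, ?_, hBC⟩
  · exact le_antisymm (rank_le_card_width B) (hA ▸ hBC ▸ rank_mul_le_left B C)
  · exact le_antisymm (rank_le_card_height C) (hA ▸ hBC ▸ rank_mul_le_right B C)

variable (K) in
theorem card_rank_eq_height {ρ n : ℕ} [Fintype K] (h : ρ ≤ n) :
    Nat.card {C : Matrix (Fin ρ) (Fin n) K // C.rank = ρ} =
      ∏ i : Fin ρ, (Fintype.card K ^ n - Fintype.card K ^ (i : ℕ)) := by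
  have hrows : ∀ C : Matrix (Fin ρ) (Fin n) K, C.rank = ρ ↔ LinearIndependent K C.row := by
    intro C
    rw [← rank_eq_card_height_iff_linearIndependent_row, Fintype.card_fin]
  calc Nat.card {C : Matrix (Fin ρ) (Fin n) K // C.rank = ρ}
      = Nat.card {s : Fin ρ → Fin n → K // LinearIndependent K s} :=
        Nat.card_congr (Equiv.subtypeEquivRight hrows)
    _ = _ := by
        rw [card_linearIndependent (by rwa [Module.finrank_fin_fun]), Module.finrank_fin_fun]

variable (K) in
theorem card_rank_eq_width {ρ m : ℕ} [Fintype K] (h : ρ ≤ m) :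
    Nat.card {B : Matrix (Fin m) (Fin ρ) K // B.rank = ρ} =
      ∏ i : Fin ρ, (Fintype.card K ^ m - Fintype.card K ^ (i : ℕ)) := by
  rw [← card_rank_eq_height K h]
  exact Nat.card_congr ((transposeAddEquiv _ _ K).toEquiv.subtypeEquiv fun B => by
    simp [rank_transpose])

end Field

section FullRankFactorization

variable {K : Type*} [Field K] {k m n : Type*} [Fintype k] [DecidableEq k] [Fintype m]
  [Fintype n] [DecidableEq n]

def mulFullRankFactors :
    {B : Matrix m k K // B.rank = Fintype.card k} ×
        {C : Matrix k n K // C.rank = Fintype.card k} →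
      {A : Matrix m n K // A.rank = Fintype.card k} :=
  fun p => ⟨p.1.1 * p.2.1, rank_mul_eq_card_of_rank_eq_card p.1.2 p.2.2⟩

theorem nonempty_fiber_mulFullRankFactors_equiv_units
    (A : {A : Matrix m n K // A.rank = Fintype.card k}) :
    Nonempty ({p // mulFullRankFactors p = A} ≃ (Matrix k k K)ˣ) := by
  obtain ⟨B₀, C₀, hB₀, hC₀, hA⟩ := exists_mul_eq_of_rank_eq A.2
  obtain ⟨S₀, hS₀⟩ := rank_eq_card_height_iff_exists_mul_eq_one.mp hC₀
  let orbit : (Matrix k k K)ˣ → {p // mulFullRankFactors p = A} := fun g =>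
    ⟨(⟨B₀ * (↑g⁻¹ : Matrix k k K), by
        rw [rank_mul_eq_left_of_isUnit_det _ _ (isUnits_det_units _), hB₀]⟩,
      ⟨(g : Matrix k k K) * C₀, by
        rw [rank_mul_eq_right_of_isUnit_det _ _ (isUnits_det_units _), hC₀]⟩),
     Subtype.ext <| by
      simp only [mulFullRankFactors]
      rw [Matrix.mul_assoc, ← Matrix.mul_assoc (↑g⁻¹ : Matrix k k K), g.inv_mul, Matrix.one_mul,
        hA]⟩
  refine ⟨(Equiv.ofBijective orbit ⟨fun g g' h => ?_, fun p => ?_⟩).symm⟩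
  · have hC : (g : Matrix k k K) * C₀ = (g' : Matrix k k K) * C₀ :=
      congrArg (fun p => p.1.2.1) h
    exact Units.ext (mul_left_injective_of_inv _ _ hS₀ hC)
  · obtain ⟨⟨⟨B, hB⟩, ⟨C, hC⟩⟩, hp⟩ := p
    obtain ⟨L, hL⟩ := rank_eq_card_width_iff_exists_mul_eq_one.mp hB
    obtain ⟨S, hS⟩ := rank_eq_card_height_iff_exists_mul_eq_one.mp hC
    obtain ⟨g, hgB, hgC⟩ :=
      exists_unit_of_mul_eq_mul hL hS (hA.trans (congrArg Subtype.val hp).symm)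
    exact ⟨g, Subtype.ext (Prod.ext (Subtype.ext hgB) (Subtype.ext hgC))⟩

variable (K k m n) in
theorem card_rank_eq_mul_card_units :
    Nat.card {A : Matrix m n K // A.rank = Fintype.card k} * Nat.card (Matrix k k K)ˣ =
      Nat.card {B : Matrix m k K // B.rank = Fintype.card k} *
        Nat.card {C : Matrix k n K // C.rank = Fintype.card k} := by
  rw [← Nat.card_prod _ {C : Matrix k n K // C.rank = Fintype.card k},
    card_eq_card_mul_card_of_nonempty_fiber_equiv mulFullRankFactors
      nonempty_fiber_mulFullRankFactors_equiv_units]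

end FullRankFactorization

end Matrix

theorem card_rank_eq_general (q ρ m n : ℕ) (hρ : ρ ≤ m) (hmn : m ≤ n)
    (K : Type) [Field K] [Fintype K] (hK : Fintype.card K = q) :
    (Nat.card {A : Matrix (Fin m) (Fin n) K // A.rank = ρ} : ℚ) =
      (q : ℚ) ^ (ρ * (ρ - 1) / 2) *
        ∏ j ∈ Finset.range ρ,
          ((q : ℚ) ^ (m - j) - 1) * ((q : ℚ) ^ (n - j) - 1) / ((q : ℚ) ^ (ρ - j) - 1) := by
  have hcount := card_rank_eq_mul_card_units K (Fin ρ) (Fin m) (Fin n)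
  simp only [Fintype.card_fin] at hcount
  rw [card_rank_eq_width K hρ, card_rank_eq_height K (hρ.trans hmn)] at hcount
  have hq : 0 < q := hK ▸ Fintype.card_pos
  have hGL : (Nat.card (GL (Fin ρ) K) : ℚ) ≠ 0 := Nat.cast_ne_zero.mpr Nat.card_pos.ne'
  rw [← Nat.cast_inj (R := ℚ), Nat.cast_mul, Nat.cast_mul] at hcount
  rw [eq_div_of_mul_eq hGL hcount, card_GL_field, hK,
    cast_prod_pow_sub_pow hq hρ, cast_prod_pow_sub_pow hq (hρ.trans hmn),
    cast_prod_pow_sub_pow hq le_rfl, Finset.prod_div_distrib, Finset.prod_mul_distrib,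
    mul_assoc, mul_div_mul_left _ _ (pow_ne_zero _ (Nat.cast_ne_zero.mpr hq.ne'))]
  ring

/-- The number of `m × n` matrices of rank exactly `ρ` over a finite field with `q`
elements equals `q^{ρ(ρ-1)/2} ∏_{j=0}^{ρ-1} (q^{m-j}-1)(q^{n-j}-1)/(q^{ρ-j}-1)`. -/
theorem card_rank_eq (q ρ m n : ℕ) (hρ : ρ ≤ m) (hmn : m ≤ n) (hq : IsPrimePow q)
    (K : Type) [Field K] [Fintype K] (hK : Fintype.card K = q) :
    (Nat.card {A : Matrix (Fin m) (Fin n) K // A.rank = ρ} : ℚ) =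
      (q : ℚ) ^ (ρ * (ρ - 1) / 2) *
        ∏ j ∈ Finset.range ρ,
          ((q : ℚ) ^ (m - j) - 1) * ((q : ℚ) ^ (n - j) - 1) / ((q : ℚ) ^ (ρ - j) - 1) :=
  card_rank_eq_general q ρ m n hρ hmn K hK
end

section
/- Let r ≤ m ≤ n be positive integers and consider the formal data N_j = r+1−j, ν_j = (m+1−j)(n+1−j) for j ∈ S = {1,…,r}, together with Euler characteristics χ_J for J ⊆ S which vanish for every nonempty J ≠ S. Then for every integer d ≥ 2, the twisted sum Σ_{∅≠J⊆S, d | gcd_{j∈J} N_j} χ_J · ∏_{j∈J} 1/(N_j s + ν_j) is identically zero, because d does not divide gcd_{j∈S}(N_j) = gcd(r, r−1, …, 1) = 1. -/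
/-!
Only `J = S` can carry a nonzero Euler characteristic, and it is excluded from the twisted
sum: `N_r = 1` forces `gcd_{j ∈ S} N_j = 1`, which no `d ≥ 2` divides.
-/

theorem Finset.sum_filter_dvd_gcd_eq_zero {α β R : Type*} [CommMonoidWithZero β]
    [NormalizedGCDMonoid β] [NonUnitalNonAssocSemiring R] [DecidableEq α]
    [DecidableRel (α := β) (· ∣ ·)] {S : Finset α} {N : α → β} {d : β}
    (hd : ¬ d ∣ S.gcd N) (χ f : Finset α → R)
    (hχ : ∀ J ⊆ S, J ≠ ∅ → J ≠ S → χ J = 0) :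
    ∑ J ∈ S.powerset.filter (fun J => J ≠ ∅ ∧ d ∣ J.gcd N), χ J * f J = 0 := by
  refine Finset.sum_eq_zero fun J hJ => ?_
  obtain ⟨hJS, hJne, hdJ⟩ := by simpa only [Finset.mem_filter, Finset.mem_powerset] using hJ
  obtain rfl | hJS' := eq_or_ne J S
  · exact absurd hdJ hd
  · rw [hχ J hJS hJne hJS', zero_mul]

theorem Nat.gcd_Icc_succ_sub_eq_one {r : ℕ} (hr : 1 ≤ r) :
    (Finset.Icc 1 r).gcd (fun j => r + 1 - j) = 1 :=
  Nat.dvd_one.mp <| by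
    simpa using Finset.gcd_dvd (f := fun j => r + 1 - j) (Finset.mem_Icc.mpr ⟨hr, le_rfl⟩)

theorem twisted_zeta_vanishes_general (r m n : ℕ) (hr : 1 ≤ r)
    (χ : Finset ℕ → ℚ)
    (hχ : ∀ J ⊆ Finset.Icc 1 r, J ≠ ∅ → J ≠ Finset.Icc 1 r → χ J = 0)
    (d : ℕ) (hd : 2 ≤ d) (s : ℚ) :
    ∑ J ∈ (Finset.Icc 1 r).powerset.filter
        (fun J => J ≠ ∅ ∧ d ∣ J.gcd (fun j => r + 1 - j)),
      χ J * ∏ j ∈ J,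
        1 / (((r + 1 - j : ℕ) : ℚ) * s + ((m + 1 - j : ℕ) : ℚ) * ((n + 1 - j : ℕ) : ℚ)) = 0 := by
  have hd_not_dvd : ¬ d ∣ (Finset.Icc 1 r).gcd (fun j => r + 1 - j) := by
    rw [Nat.gcd_Icc_succ_sub_eq_one hr, Nat.dvd_one]
    omega
  exact Finset.sum_filter_dvd_gcd_eq_zero hd_not_dvd χ _ hχ

/-- Computational core of the holomorphy conjecture for determinantal varieties:
with `N_j = r+1-j`, `ν_j = (m+1-j)(n+1-j)` for `j ∈ S = {1,…,r}` and Euler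
characteristics `χ_J` vanishing for all nonempty `J ≠ S`, the twisted sum over
nonempty `J ⊆ S` with `d ∣ gcd_{j∈J} N_j` is identically zero for `d ≥ 2`,
because `gcd(r, r-1, …, 1) = 1`. -/
theorem twisted_zeta_vanishes (r m n : ℕ) (hr : 1 ≤ r) (hrm : r ≤ m) (hmn : m ≤ n)
    (χ : Finset ℕ → ℚ)
    (hχ : ∀ J ⊆ Finset.Icc 1 r, J ≠ ∅ → J ≠ Finset.Icc 1 r → χ J = 0)
    (d : ℕ) (hd : 2 ≤ d) (s : ℚ) :
    ∑ J ∈ (Finset.Icc 1 r).powerset.filter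
        (fun J => J ≠ ∅ ∧ d ∣ J.gcd (fun j => r + 1 - j)),
      χ J * ∏ j ∈ J,
        1 / (((r + 1 - j : ℕ) : ℚ) * s + ((m + 1 - j : ℕ) : ℚ) * ((n + 1 - j : ℕ) : ℚ)) = 0 :=
  twisted_zeta_vanishes_general r m n hr χ hχ d hd s
end
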